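/- arXiv:2004.07406 — 4 statements merged into one kernel-verified Lean document; each statement's English description precedes it below -/
import Mathlib

section
/- For N ≥ 3 and γ > 0, (N+γ)²/(N+2γ+γ²) > N-1 holds if and only if γ < N/(N-2). -/
/-- (N+γ)²/(N+2γ+γ²) > N-1 iff γ < N/(N-2). -/
theorem cordes_range (N : ℕ) (hN : 3 ≤ N) (γ : ℝ) (hγ : 0 < γ) :
    ((N : ℝ) + γ) ^ 2 / ((N : ℝ) + 2 * γ + γ ^ 2) > (N : ℝ) - 1 ↔
      γ < (N : ℝ) / ((N : ℝ) - 2) := by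
  have hn : (3 : ℝ) ≤ (N : ℝ) := by exact_mod_cast hN
  have hden : 0 < (N : ℝ) + 2 * γ + γ ^ 2 := by nlinarith
  have h2 : 0 < (N : ℝ) - 2 := by linarith
  rw [gt_iff_lt, lt_div_iff₀ hden, lt_div_iff₀ h2]
  constructor <;> intro h <;> nlinarith [sq_nonneg (γ + 1)]
end

section
/- Let N ≥ 3, N < t < ∞, σ ∈ ℝ, and let β^- ∈ ℝ satisfy β^- + σ < 0. Suppose b : (0,1) → ℝ is measurable and there is a constant M such that ∫_s^{2s} |b(τ)|^t dτ ≤ M s^{1 - t(2+σ)} for all 0 < s ≤ 1/2. Then ∫_0^1 |b(τ)| / τ^{β^- - 1} dτ < ∞. -/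
/-!
Split `(0, 1)` into the dyadic annuli `(s, 2s]`, `s = 2^{-i-1}`. On such an annulus the weight
`τ^{1-β}` is comparable to `s^{1-β}`, and Hölder's inequality with exponents `t` and `t'` bounds
`∫ |b|` by `(M s^{1 - t(2+σ)})^{1/t} s^{1/t'}`, so the annulus contributes `O(s^{-(β+σ)})`.
Since `β + σ < 0` these contributions form a convergent geometric series.
-/

open Real MeasureTheory
open scoped ENNReal

lemma Ioo_zero_one_subset_iUnion_Ioc_half_pow :
    Set.Ioo (0 : ℝ) 1 ⊆ ⋃ i : ℕ, Set.Ioc ((1 / 2 : ℝ) ^ (i + 1)) ((1 / 2) ^ i) := fun x hx =>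
  Set.mem_iUnion.2 (exists_nat_pow_near_of_lt_one hx.1 hx.2.le (by norm_num) (by norm_num))

lemma lintegral_Ioo_zero_one_lt_top_of_dyadic {f : ℝ → ℝ≥0∞} {C γ : ℝ} (hC : 0 ≤ C)
    (hγ : 0 < γ)
    (h : ∀ s : ℝ, 0 < s → s ≤ 1 / 2 →
      ∫⁻ τ in Set.Ioc s (2 * s), f τ ≤ ENNReal.ofReal (C * s ^ γ)) :
    ∫⁻ τ in Set.Ioo (0 : ℝ) 1, f τ < ⊤ := by
  set r : ℝ := (1 / 2) ^ γ
  have hr0 : 0 ≤ r := by positivity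
  have hr1 : r < 1 := Real.rpow_lt_one (by norm_num) (by norm_num) hγ
  have hannulus : ∀ i : ℕ, ∫⁻ τ in Set.Ioc ((1 / 2 : ℝ) ^ (i + 1)) ((1 / 2) ^ i), f τ ≤
      ENNReal.ofReal (C * r ^ (i + 1)) := by
    intro i
    have hs : (1 / 2 : ℝ) ^ i = 2 * (1 / 2) ^ (i + 1) := by ring
    rw [hs, Real.rpow_pow_comm (by norm_num)]
    exact h _ (by positivity) (pow_le_of_le_one (by norm_num) (by norm_num) (by omega))
  have hsum : Summable fun i : ℕ => C * r ^ (i + 1) := by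
    simpa only [pow_succ, mul_assoc] using
      ((summable_geometric_of_lt_one hr0 hr1).mul_right r).mul_left C
  calc ∫⁻ τ in Set.Ioo (0 : ℝ) 1, f τ
      ≤ ∫⁻ τ in ⋃ i : ℕ, Set.Ioc ((1 / 2 : ℝ) ^ (i + 1)) ((1 / 2) ^ i), f τ :=
        lintegral_mono_set Ioo_zero_one_subset_iUnion_Ioc_half_pow
    _ ≤ ∑' i : ℕ, ∫⁻ τ in Set.Ioc ((1 / 2 : ℝ) ^ (i + 1)) ((1 / 2) ^ i), f τ :=
        lintegral_iUnion_le _ _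
    _ ≤ ∑' i : ℕ, ENNReal.ofReal (C * r ^ (i + 1)) := ENNReal.tsum_le_tsum hannulus
    _ = ENNReal.ofReal (∑' i : ℕ, C * r ^ (i + 1)) :=
        (ENNReal.ofReal_tsum_of_nonneg (fun i => by positivity) hsum).symm
    _ < ⊤ := ENNReal.ofReal_lt_top

lemma ENNReal.lintegral_le_lintegral_rpow_mul_measure_univ {α : Type*} [MeasurableSpace α]
    (μ : Measure α) {p : ℝ} (hp : 1 < p) {f : α → ℝ≥0∞} (hf : AEMeasurable f μ) :
    ∫⁻ x, f x ∂μ ≤ (∫⁻ x, f x ^ p ∂μ) ^ (1 / p) * μ Set.univ ^ (1 - 1 / p) := by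
  have hpq := Real.HolderConjugate.conjExponent hp
  rw [one_div p, hpq.one_sub_inv, ← one_div]
  simpa using ENNReal.lintegral_mul_le_Lp_mul_Lq μ hpq hf (aemeasurable_const (b := 1))

lemma rpow_le_max_one_two_rpow_mul_rpow {s τ : ℝ} (a : ℝ) (hs : 0 < s)
    (hτ : τ ∈ Set.Ioc s (2 * s)) : τ ^ a ≤ max 1 (2 ^ a) * s ^ a := by
  rcases le_or_gt 0 a with ha | ha
  · calc τ ^ a ≤ (2 * s) ^ a := Real.rpow_le_rpow (hs.trans hτ.1).le hτ.2 ha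
      _ = 2 ^ a * s ^ a := Real.mul_rpow zero_le_two hs.le
      _ ≤ max 1 (2 ^ a) * s ^ a := by gcongr; exact le_max_right _ _
  · calc τ ^ a ≤ s ^ a := Real.rpow_le_rpow_of_nonpos hs hτ.1.le ha.le
      _ ≤ max 1 (2 ^ a) * s ^ a :=
        le_mul_of_one_le_left (Real.rpow_nonneg hs.le _) (le_max_left _ _)

lemma setLIntegral_Ioc_abs_div_rpow_le {b : ℝ → ℝ} (hb : Measurable b) {s t c e M : ℝ}
    (hs : 0 < s) (ht : 1 < t) (hM : 0 ≤ M)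
    (hbd : ∫⁻ τ in Set.Ioc s (2 * s), ENNReal.ofReal (|b τ| ^ t) ≤ ENNReal.ofReal (M * s ^ e)) :
    ∫⁻ τ in Set.Ioc s (2 * s), ENNReal.ofReal (|b τ| / τ ^ c) ≤
      ENNReal.ofReal (max 1 (2 ^ (-c)) * M ^ (1 / t) * s ^ (-c + e / t + (1 - 1 / t))) := by
  set K := max 1 ((2 : ℝ) ^ (-c))
  have hweight : ∀ τ ∈ Set.Ioc s (2 * s),
      ENNReal.ofReal (|b τ| / τ ^ c) ≤ ENNReal.ofReal (K * s ^ (-c)) * ENNReal.ofReal |b τ| := by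
    intro τ hτ
    rw [← ENNReal.ofReal_mul (by positivity), div_eq_mul_inv,
      ← Real.rpow_neg (hs.trans hτ.1).le, mul_comm]
    gcongr
    exact rpow_le_max_one_two_rpow_mul_rpow _ hs hτ
  have hholder : ∫⁻ τ in Set.Ioc s (2 * s), ENNReal.ofReal |b τ| ≤
      ENNReal.ofReal (M * s ^ e) ^ (1 / t) * ENNReal.ofReal s ^ (1 - 1 / t) := by
    have hvol : volume (Set.Ioc s (2 * s)) = ENNReal.ofReal s := by
      rw [Real.volume_Ioc]; ring_nf
    have := ENNReal.lintegral_le_lintegral_rpow_mul_measure_univ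
      (volume.restrict (Set.Ioc s (2 * s))) ht hb.abs.ennreal_ofReal.aemeasurable
    simp_rw [Measure.restrict_apply_univ, hvol,
      ENNReal.ofReal_rpow_of_nonneg (abs_nonneg _) (by linarith : (0 : ℝ) ≤ t)] at this
    refine this.trans ?_
    gcongr
  calc ∫⁻ τ in Set.Ioc s (2 * s), ENNReal.ofReal (|b τ| / τ ^ c)
      ≤ ∫⁻ τ in Set.Ioc s (2 * s), ENNReal.ofReal (K * s ^ (-c)) * ENNReal.ofReal |b τ| :=
        setLIntegral_mono' measurableSet_Ioc hweight
    _ = ENNReal.ofReal (K * s ^ (-c)) * ∫⁻ τ in Set.Ioc s (2 * s), ENNReal.ofReal |b τ| :=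
        lintegral_const_mul' _ _ ENNReal.ofReal_ne_top
    _ ≤ ENNReal.ofReal (K * s ^ (-c)) *
          (ENNReal.ofReal (M * s ^ e) ^ (1 / t) * ENNReal.ofReal s ^ (1 - 1 / t)) := by
        gcongr
    _ = ENNReal.ofReal (K * M ^ (1 / t) * s ^ (-c + e / t + (1 - 1 / t))) := by
        have ht0 : 0 < t := by linarith
        have ht' : 1 / t ≤ 1 := by rw [div_le_one ht0]; exact ht.le
        rw [ENNReal.ofReal_rpow_of_nonneg (by positivity) (by positivity),
          ENNReal.ofReal_rpow_of_nonneg hs.le (by linarith), ← ENNReal.ofReal_mul (by positivity),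
          ← ENNReal.ofReal_mul (by positivity), Real.mul_rpow hM (by positivity),
          ← Real.rpow_mul hs.le, Real.rpow_add hs, Real.rpow_add hs, mul_one_div]
        ring_nf

/-- Dyadic estimate: the variation-of-parameters integrand is integrable on (0,1). -/
theorem dyadic_integrability (N : ℕ) (hN : 3 ≤ N) (t σ β M : ℝ) (ht : (N : ℝ) < t)
    (hβ : β + σ < 0) (b : ℝ → ℝ) (hb : Measurable b)
    (hbd : ∀ s : ℝ, 0 < s → s ≤ 1 / 2 →
      ∫⁻ τ in Set.Ioc s (2 * s), ENNReal.ofReal (|b τ| ^ t) ≤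
        ENNReal.ofReal (M * s ^ (1 - t * (2 + σ)))) :
    ∫⁻ τ in Set.Ioo (0:ℝ) 1, ENNReal.ofReal (|b τ| / τ ^ (β - 1)) < ⊤ := by
  have ht1 : 1 < t := by
    have : (3 : ℝ) ≤ N := by exact_mod_cast hN
    linarith
  refine lintegral_Ioo_zero_one_lt_top_of_dyadic (γ := -(β + σ))
    (C := max 1 (2 ^ (-(β - 1))) * max M 0 ^ (1 / t)) (by positivity) (by linarith)
    fun s hs hs2 => ?_
  -- `M` may be negative, and `rpow` at a negative base is junk
  have hbd' : ∫⁻ τ in Set.Ioc s (2 * s), ENNReal.ofReal (|b τ| ^ t) ≤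
      ENNReal.ofReal (max M 0 * s ^ (1 - t * (2 + σ))) :=
    (hbd s hs hs2).trans (by gcongr; exact le_max_left _ _)
  convert setLIntegral_Ioc_abs_div_rpow_le hb hs ht1 (le_max_right _ _) hbd' using 4
  field_simp
  ring
end

section
/- Let N ≥ 3, γ > 0, and suppose g : (0,1) → ℝ is bounded. Define h(r) := r^{-(N-1)/(γ+1)} ∫_0^r τ^{(N-1)/(γ+1)} g(τ)/(γ+1) dτ and u(r) := -∫_r^1 h(t) dt. Then u satisfies (γ+1) u''(r) + (N-1) u'(r)/r = g(r) for 0 < r < 1, u(1) = 0, and there is a constant C = C(N,γ) such that sup_{0<r<1} (|u(r)| + |u'(r)|) ≤ C sup_{0<r<1} |g(r)|. -/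
open Real MeasureTheory intervalIntegral Set

/-! With `α = (N - 1) / (γ + 1)` the equation reads `(γ + 1) r⁻ᵅ (rᵅ u')' = g`, so `u' = h` is
`r⁻ᵅ` times a primitive of `τᵅ g / (γ + 1)`. Since `α > -1` the weight `τᵅ` is integrable at `0`,
and `|∫₀ʳ τᵅ g| ≤ M rᵅ⁺¹ / (α + 1)` gives `|h r| ≤ M r / ((γ + 1)(α + 1))`; integrating `h`
over `[r, 1]` bounds `u` by the same constant. -/

noncomputable def radialPrimitive (α : ℝ) (φ : ℝ → ℝ) (r : ℝ) : ℝ :=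
  r ^ (-α) * ∫ τ in (0:ℝ)..r, τ ^ α * φ τ

noncomputable def radialSolution (α : ℝ) (φ : ℝ → ℝ) (r : ℝ) : ℝ :=
  -∫ s in r..(1:ℝ), radialPrimitive α φ s

section
variable {α B : ℝ} {φ : ℝ → ℝ}

lemma norm_rpow_mul_le_rpow_mul (hB : ∀ τ ∈ Ioo (0:ℝ) 1, |φ τ| ≤ B) {τ : ℝ}
    (hτ : τ ∈ Ioo (0:ℝ) 1) : ‖τ ^ α * φ τ‖ ≤ τ ^ α * B := by
  rw [norm_mul, norm_of_nonneg (rpow_nonneg hτ.1.le α)]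
  exact mul_le_mul_of_nonneg_left (hB τ hτ) (rpow_nonneg hτ.1.le α)

lemma integrableOn_rpow_mul (hα : -1 < α) (hφ : ContinuousOn φ (Ioo 0 1))
    (hB : ∀ τ ∈ Ioo (0:ℝ) 1, |φ τ| ≤ B) :
    IntegrableOn (fun τ => τ ^ α * φ τ) (Ioo 0 1) := by
  have hdom : IntegrableOn (fun τ : ℝ => τ ^ α * B) (Ioo 0 1) :=
    (intervalIntegrable_iff_integrableOn_Ioo_of_le zero_le_one).mp
      ((intervalIntegrable_rpow' hα).mul_const B)
  refine hdom.mono' ?_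
    (ae_restrict_of_forall_mem measurableSet_Ioo fun τ hτ => norm_rpow_mul_le_rpow_mul hB hτ)
  exact ((continuousOn_id.rpow_const fun τ hτ => Or.inl hτ.1.ne').mul hφ).aestronglyMeasurable
    measurableSet_Ioo

lemma abs_integral_rpow_mul_le (hα : -1 < α) (hB : ∀ τ ∈ Ioo (0:ℝ) 1, |φ τ| ≤ B) {t : ℝ}
    (ht : t ∈ Icc (0:ℝ) 1) :
    |∫ τ in (0:ℝ)..t, τ ^ α * φ τ| ≤ B * t ^ (α + 1) / (α + 1) := by
  have hbound : ∀ᵐ τ ∂volume.restrict (uIoc 0 t), ‖τ ^ α * φ τ‖ ≤ τ ^ α * B := by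
    rw [uIoc_of_le ht.1, ← Measure.restrict_congr_set Ioo_ae_eq_Ioc]
    exact ae_restrict_of_forall_mem measurableSet_Ioo fun τ hτ =>
      norm_rpow_mul_le_rpow_mul hB ⟨hτ.1, hτ.2.trans_le ht.2⟩
  have hB0 : 0 ≤ B := (abs_nonneg _).trans (hB (1 / 2) (by norm_num))
  have key := norm_integral_le_abs_of_norm_le hbound ((intervalIntegrable_rpow' hα).mul_const B)
  have hα1 : 0 < α + 1 := by linarith
  rw [intervalIntegral.integral_mul_const, integral_rpow (Or.inl hα), zero_rpow hα1.ne', sub_zero,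
    abs_of_nonneg (by have := rpow_nonneg ht.1 (α + 1); positivity)] at key
  rw [← norm_eq_abs]
  exact key.trans_eq (by ring)

lemma abs_radialPrimitive_le (hα : -1 < α) (hB : ∀ τ ∈ Ioo (0:ℝ) 1, |φ τ| ≤ B) {t : ℝ}
    (ht : t ∈ Ioc (0:ℝ) 1) : |radialPrimitive α φ t| ≤ B / (α + 1) := by
  have hα1 : 0 < α + 1 := by linarith
  have hB0 : 0 ≤ B := (abs_nonneg _).trans (hB (1 / 2) (by norm_num))
  have hpow : t ^ (-α) * t ^ (α + 1) = t := by
    rw [← rpow_add ht.1, neg_add_cancel_left, rpow_one]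
  calc |radialPrimitive α φ t|
      = t ^ (-α) * |∫ τ in (0:ℝ)..t, τ ^ α * φ τ| := by
        rw [radialPrimitive, abs_mul, abs_of_nonneg (rpow_nonneg ht.1.le _)]
    _ ≤ t ^ (-α) * (B * t ^ (α + 1) / (α + 1)) := by
        gcongr
        · exact rpow_nonneg ht.1.le _
        · exact abs_integral_rpow_mul_le hα hB (Ioc_subset_Icc_self ht)
    _ = B * (t ^ (-α) * t ^ (α + 1)) / (α + 1) := by ring
    _ = B * t / (α + 1) := by rw [hpow]
    _ ≤ B / (α + 1) := by gcongr; linarith [mul_le_of_le_one_right hB0 ht.2]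

lemma continuousOn_radialPrimitive (hα : -1 < α) (hφ : ContinuousOn φ (Ioo 0 1))
    (hB : ∀ τ ∈ Ioo (0:ℝ) 1, |φ τ| ≤ B) : ContinuousOn (radialPrimitive α φ) (Ioc 0 1) := by
  have hint : IntegrableOn (fun τ => τ ^ α * φ τ) (Icc 0 1) :=
    (integrableOn_Icc_iff_integrableOn_Ioo).mpr (integrableOn_rpow_mul hα hφ hB)
  refine (continuousOn_id.rpow_const fun t ht => Or.inl ht.1.ne').mul ?_
  exact ((continuousOn_primitive hint).congr fun t ht => integral_of_le ht.1).mono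
    Ioc_subset_Icc_self

lemma hasDerivAt_radialPrimitive (hα : -1 < α) (hφ : ContinuousOn φ (Ioo 0 1))
    (hB : ∀ τ ∈ Ioo (0:ℝ) 1, |φ τ| ≤ B) {r : ℝ} (hr : r ∈ Ioo (0:ℝ) 1) :
    HasDerivAt (radialPrimitive α φ) (φ r - α * radialPrimitive α φ r / r) r := by
  have hweight : ContinuousOn (fun τ => τ ^ α * φ τ) (Ioo 0 1) :=
    (continuousOn_id.rpow_const fun τ hτ => Or.inl hτ.1.ne').mul hφ
  have hint : IntervalIntegrable (fun τ => τ ^ α * φ τ) volume 0 r :=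
    (intervalIntegrable_iff_integrableOn_Ioo_of_le hr.1.le).mpr
      ((integrableOn_rpow_mul hα hφ hB).mono_set (Ioo_subset_Ioo_right hr.2.le))
  have hprim := integral_hasDerivAt_right hint
    (hweight.stronglyMeasurableAtFilter isOpen_Ioo r hr)
    (hweight.continuousAt (isOpen_Ioo.mem_nhds hr))
  refine ((hasDerivAt_rpow_const (p := -α) (Or.inl hr.1.ne')).mul hprim).congr_deriv ?_
  have hinv : r ^ (-α) * r ^ α = 1 := by rw [← rpow_add hr.1, neg_add_cancel, rpow_zero]
  rw [radialPrimitive, rpow_sub hr.1, rpow_one]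
  field_simp
  linear_combination φ r * hinv

lemma hasDerivAt_radialSolution (hα : -1 < α) (hφ : ContinuousOn φ (Ioo 0 1))
    (hB : ∀ τ ∈ Ioo (0:ℝ) 1, |φ τ| ≤ B) {r : ℝ} (hr : r ∈ Ioo (0:ℝ) 1) :
    HasDerivAt (radialSolution α φ) (radialPrimitive α φ r) r := by
  have hcont := continuousOn_radialPrimitive hα hφ hB
  have hint : IntervalIntegrable (radialPrimitive α φ) volume r 1 :=
    (hcont.mono fun s hs => ⟨hr.1.trans_le hs.1, hs.2⟩).intervalIntegrable_of_Icc hr.2.le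
  have hcont' := hcont.mono Ioo_subset_Ioc_self
  have hleft := (integral_hasDerivAt_left hint (hcont'.stronglyMeasurableAtFilter isOpen_Ioo r hr)
    (hcont'.continuousAt (isOpen_Ioo.mem_nhds hr))).fun_neg
  rw [neg_neg] at hleft
  exact hleft

lemma radialSolution_ode (hα : -1 < α) (hφ : ContinuousOn φ (Ioo 0 1))
    (hB : ∀ τ ∈ Ioo (0:ℝ) 1, |φ τ| ≤ B) {r : ℝ} (hr : r ∈ Ioo (0:ℝ) 1) :
    deriv (deriv (radialSolution α φ)) r + α * deriv (radialSolution α φ) r / r = φ r := by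
  have hderiv : deriv (radialSolution α φ) =ᶠ[nhds r] radialPrimitive α φ :=
    Filter.eventually_of_mem (isOpen_Ioo.mem_nhds hr) fun s hs =>
      (hasDerivAt_radialSolution hα hφ hB hs).deriv
  rw [hderiv.deriv_eq, (hasDerivAt_radialPrimitive hα hφ hB hr).deriv, hderiv.eq_of_nhds]
  ring

lemma abs_radialSolution_le (hα : -1 < α) (hB : ∀ τ ∈ Ioo (0:ℝ) 1, |φ τ| ≤ B) {r : ℝ}
    (hr : r ∈ Icc (0:ℝ) 1) : |radialSolution α φ r| ≤ B / (α + 1) := by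
  have hbound : ∀ s ∈ uIoc r 1, ‖radialPrimitive α φ s‖ ≤ B / (α + 1) := by
    rw [uIoc_of_le hr.2]
    exact fun s hs => abs_radialPrimitive_le hα hB ⟨hr.1.trans_lt hs.1, hs.2⟩
  have hC : 0 ≤ B / (α + 1) := (abs_nonneg _).trans
    (abs_radialPrimitive_le hα hB (right_mem_Ioc.mpr one_pos))
  rw [radialSolution, abs_neg, ← norm_eq_abs]
  calc ‖∫ s in r..(1:ℝ), radialPrimitive α φ s‖ ≤ B / (α + 1) * |1 - r| :=
        norm_integral_le_of_norm_le_const hbound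
    _ ≤ B / (α + 1) * 1 := by
        gcongr; rw [abs_of_nonneg (by linarith [hr.2])]; linarith [hr.1]
    _ = B / (α + 1) := mul_one _

end

theorem radial_solution_operator_general (N : ℕ) (γ : ℝ) (hγ : 0 < γ) :
    ∃ C > (0:ℝ), ∀ (g : ℝ → ℝ) (M : ℝ), ContinuousOn g (Set.Ioo (0:ℝ) 1) →
      (∀ r ∈ Set.Ioo (0:ℝ) 1, |g r| ≤ M) →
      ∀ h u : ℝ → ℝ,
        (∀ r : ℝ, h r = r ^ (-(((N : ℝ) - 1) / (γ + 1))) *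
          ∫ τ in (0:ℝ)..r, τ ^ (((N : ℝ) - 1) / (γ + 1)) * g τ / (γ + 1)) →
        (∀ r : ℝ, u r = -∫ s in r..(1:ℝ), h s) →
        (∀ r ∈ Set.Ioo (0:ℝ) 1,
          (γ + 1) * deriv (deriv u) r + ((N : ℝ) - 1) * deriv u r / r = g r) ∧
        u 1 = 0 ∧
        ∀ r ∈ Set.Ioo (0:ℝ) 1, |u r| + |deriv u r| ≤ C * M := by
  set α := ((N : ℝ) - 1) / (γ + 1) with hα_def
  have hγ1 : 0 < γ + 1 := by linarith
  have hα1 : 0 < α + 1 := by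
    rw [hα_def, div_add_one hγ1.ne']
    exact div_pos (by linarith [N.cast_nonneg (α := ℝ)]) hγ1
  have hα : -1 < α := by linarith
  refine ⟨2 / ((γ + 1) * (α + 1)), by positivity, fun g M hg hgM h u hh hu => ?_⟩
  set φ := fun τ => g τ / (γ + 1)
  have hφ : ContinuousOn φ (Ioo 0 1) := hg.div_const _
  have hφB : ∀ τ ∈ Ioo (0:ℝ) 1, |φ τ| ≤ M / (γ + 1) := fun τ hτ => by
    rw [abs_div, abs_of_pos hγ1]; exact div_le_div_of_nonneg_right (hgM τ hτ) hγ1.le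
  obtain rfl : h = radialPrimitive α φ := funext fun r => by
    simp only [hh, radialPrimitive, mul_div_assoc, φ]
  obtain rfl : u = radialSolution α φ := funext hu
  refine ⟨fun r hr => ?_, by simp [radialSolution], fun r hr => ?_⟩
  · have hode := radialSolution_ode hα hφ hφB hr
    have hN : (N : ℝ) - 1 = (γ + 1) * α := by rw [hα_def]; field_simp
    calc (γ + 1) * deriv (deriv (radialSolution α φ)) r
          + (N - 1) * deriv (radialSolution α φ) r / r
        = (γ + 1) * φ r := by rw [← hode, hN]; ring
      _ = g r := mul_div_cancel₀ _ hγ1.ne'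
  · rw [(hasDerivAt_radialSolution hα hφ hφB hr).deriv]
    calc |radialSolution α φ r| + |radialPrimitive α φ r|
        ≤ M / (γ + 1) / (α + 1) + M / (γ + 1) / (α + 1) :=
          add_le_add (abs_radialSolution_le hα hφB (Ioo_subset_Icc_self hr))
            (abs_radialPrimitive_le hα hφB (Ioo_subset_Ioc_self hr))
      _ = 2 / ((γ + 1) * (α + 1)) * M := by field_simp; ring

/-- Explicit solution operator for the radial (k = 0 mode) part of L_γ,
with uniform L^∞ estimates. -/
theorem radial_solution_operator (N : ℕ) (hN : 3 ≤ N) (γ : ℝ) (hγ : 0 < γ) :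
    ∃ C > (0:ℝ), ∀ (g : ℝ → ℝ) (M : ℝ), ContinuousOn g (Set.Ioo (0:ℝ) 1) →
      (∀ r ∈ Set.Ioo (0:ℝ) 1, |g r| ≤ M) →
      ∀ h u : ℝ → ℝ,
        (∀ r : ℝ, h r = r ^ (-(((N : ℝ) - 1) / (γ + 1))) *
          ∫ τ in (0:ℝ)..r, τ ^ (((N : ℝ) - 1) / (γ + 1)) * g τ / (γ + 1)) →
        (∀ r : ℝ, u r = -∫ s in r..(1:ℝ), h s) →
        (∀ r ∈ Set.Ioo (0:ℝ) 1,
          (γ + 1) * deriv (deriv u) r + ((N : ℝ) - 1) * deriv u r / r = g r) ∧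
        u 1 = 0 ∧
        ∀ r ∈ Set.Ioo (0:ℝ) 1, |u r| + |deriv u r| ≤ C * M :=
  radial_solution_operator_general N γ hγ
end

section
/- Let N ≥ 3, γ > 0, λ > 0 and β^± the roots of (1+γ)β² + (N-2-γ)β - λ = 0, and fix σ ∈ ℝ with β^+ + σ > 0 and β^- + σ < 0 (in particular β^+ + σ ≠ β^- + σ and both nonzero). Suppose C, D ∈ ℝ are such that ∫_1^2 s^{N-1} |C τ^{β^+ + σ} s^{β^+} + D τ^{β^- + σ} s^{β^-}|^t ds ≤ K for all τ > 0 (with t ≥ 1 fixed, K finite). Then C = D = 0. -/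
open Real

/-- Liouville-type rigidity: a combination C r^{β⁺} + D r^{β⁻} satisfying the
scale-invariant growth bound for all τ > 0 must vanish. -/
theorem liouville_rigidity (N : ℕ) (hN : 3 ≤ N) (γ lam σ t K βp βm C D : ℝ)
    (hγ : 0 < γ) (hlam : 0 < lam) (ht : 1 ≤ t)
    (hβp : (1 + γ) * βp ^ 2 + ((N : ℝ) - 2 - γ) * βp - lam = 0)
    (hβm : (1 + γ) * βm ^ 2 + ((N : ℝ) - 2 - γ) * βm - lam = 0)
    (hmp : βm < βp) (h1 : 0 < βp + σ) (h2 : βm + σ < 0)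
    (hbound : ∀ τ : ℝ, 0 < τ →
      ∫ s in (1:ℝ)..2, s ^ ((N : ℝ) - 1) *
        |C * τ ^ (βp + σ) * s ^ βp + D * τ ^ (βm + σ) * s ^ βm| ^ t ≤ K) :
    C = 0 ∧ D = 0 := by
  have h12 : (1:ℝ) ≤ 2 := one_le_two
  have htpos : (0:ℝ) < t := lt_of_lt_of_le one_pos ht
  have hN3 : (3:ℝ) ≤ (N:ℝ) := by exact_mod_cast hN
  have hcs : ∀ e : ℝ, ContinuousOn (fun s : ℝ => s ^ e) (Set.uIcc (1:ℝ) 2) := by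
    intro e
    apply ContinuousOn.rpow_const continuousOn_id
    intro x hx
    rw [Set.uIcc_of_le h12] at hx
    exact Or.inl (ne_of_gt (by linarith [hx.1] : (0:ℝ) < x))
  have hint : ∀ e : ℝ, IntervalIntegrable (fun s : ℝ => s ^ e) MeasureTheory.volume 1 2 :=
    fun e => (hcs e).intervalIntegrable
  set G := ∫ s in (1:ℝ)..2, s ^ βp with hGdef
  set H := ∫ s in (1:ℝ)..2, s ^ βm with hHdef
  have hG : 0 < G := intervalIntegral.intervalIntegral_pos_of_pos_on (hint βp)
    (fun x hx => Real.rpow_pos_of_pos (by linarith [hx.1]) βp) one_lt_two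
  have hH : 0 < H := intervalIntegral.intervalIntegral_pos_of_pos_on (hint βm)
    (fun x hx => Real.rpow_pos_of_pos (by linarith [hx.1]) βm) one_lt_two
  have hK : 0 ≤ K := by
    refine le_trans ?_ (hbound 1 one_pos)
    apply intervalIntegral.integral_nonneg h12
    intro u hu
    exact mul_nonneg (Real.rpow_nonneg (by linarith [hu.1]) _)
      (Real.rpow_nonneg (abs_nonneg _) _)
  have key : ∀ τ : ℝ, 0 < τ →
      |C| * τ ^ (βp + σ) * G ≤ 1 + K + |D| * τ ^ (βm + σ) * H ∧
      |D| * τ ^ (βm + σ) * H ≤ 1 + K + |C| * τ ^ (βp + σ) * G := by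
    intro τ hτ
    set A := C * τ ^ (βp + σ) with hA
    set B := D * τ ^ (βm + σ) with hB
    have hcf : ContinuousOn (fun s : ℝ => A * s ^ βp + B * s ^ βm) (Set.uIcc (1:ℝ) 2) :=
      (continuousOn_const.mul (hcs βp)).add (continuousOn_const.mul (hcs βm))
    have hfa : IntervalIntegrable (fun s : ℝ => |A * s ^ βp + B * s ^ βm|)
        MeasureTheory.volume 1 2 := hcf.abs.intervalIntegrable
    have hbig : IntervalIntegrable
        (fun s : ℝ => s ^ ((N:ℝ)-1) * |A * s ^ βp + B * s ^ βm| ^ t)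
        MeasureTheory.volume 1 2 := by
      apply ContinuousOn.intervalIntegrable
      exact (hcs _).mul (hcf.abs.rpow_const (fun x _ => Or.inr htpos.le))
    -- L¹ bound
    have hL1 : (∫ s in (1:ℝ)..2, |A * s ^ βp + B * s ^ βm|) ≤ 1 + K := by
      have hmono : (∫ s in (1:ℝ)..2, |A * s ^ βp + B * s ^ βm|)
          ≤ ∫ s in (1:ℝ)..2,
            (1 + s ^ ((N:ℝ)-1) * |A * s ^ βp + B * s ^ βm| ^ t) := by
        apply intervalIntegral.integral_mono_on h12 hfa
          (intervalIntegrable_const.add hbig)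
        intro x hx
        have hx1 : (1:ℝ) ≤ x := hx.1
        have hpow1 : (1:ℝ) ≤ x ^ ((N:ℝ)-1) := Real.one_le_rpow hx1 (by linarith)
        set y := |A * x ^ βp + B * x ^ βm| with hy
        have hy0 : 0 ≤ y := abs_nonneg _
        have hyt : 0 ≤ y ^ t := Real.rpow_nonneg hy0 t
        rcases le_or_gt y 1 with hc | hc
        · have : 0 ≤ x ^ ((N:ℝ)-1) * y ^ t :=
            mul_nonneg (le_trans zero_le_one hpow1) hyt
          linarith
        · have hyy : y ≤ y ^ t := by
            calc y = y ^ (1:ℝ) := (Real.rpow_one y).symm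
            _ ≤ y ^ t := Real.rpow_le_rpow_of_exponent_le hc.le ht
          have h2' : y ^ t ≤ x ^ ((N:ℝ)-1) * y ^ t := le_mul_of_one_le_left hyt hpow1
          linarith
      have hsplit : (∫ s in (1:ℝ)..2,
          (1 + s ^ ((N:ℝ)-1) * |A * s ^ βp + B * s ^ βm| ^ t))
          = 1 + ∫ s in (1:ℝ)..2, s ^ ((N:ℝ)-1) * |A * s ^ βp + B * s ^ βm| ^ t := by
        rw [intervalIntegral.integral_add intervalIntegrable_const hbig]
        norm_num
      have := hbound τ hτ
      rw [hsplit] at hmono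
      linarith
    -- triangle inequalities
    have habs1 : ∀ x ∈ Set.Icc (1:ℝ) 2,
        |A| * x ^ βp ≤ |A * x ^ βp + B * x ^ βm| + |B| * x ^ βm := by
      intro x hx
      have hxp : (0:ℝ) < x := by linarith [hx.1]
      have e1 : |A * x ^ βp| = |A| * x ^ βp := by
        rw [abs_mul A (x ^ βp), abs_of_pos (Real.rpow_pos_of_pos hxp βp)]
      have e2 : |B * x ^ βm| = |B| * x ^ βm := by
        rw [abs_mul B (x ^ βm), abs_of_pos (Real.rpow_pos_of_pos hxp βm)]
      rw [← e1, ← e2]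
      calc |A * x ^ βp| = |(A * x ^ βp + B * x ^ βm) + (-(B * x ^ βm))| := by
            congr 1; ring
      _ ≤ |A * x ^ βp + B * x ^ βm| + |-(B * x ^ βm)| := abs_add_le _ _
      _ = |A * x ^ βp + B * x ^ βm| + |B * x ^ βm| := by rw [abs_neg]
    have habs2 : ∀ x ∈ Set.Icc (1:ℝ) 2,
        |B| * x ^ βm ≤ |A * x ^ βp + B * x ^ βm| + |A| * x ^ βp := by
      intro x hx
      have hxp : (0:ℝ) < x := by linarith [hx.1]
      have e1 : |A * x ^ βp| = |A| * x ^ βp := by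
        rw [abs_mul A (x ^ βp), abs_of_pos (Real.rpow_pos_of_pos hxp βp)]
      have e2 : |B * x ^ βm| = |B| * x ^ βm := by
        rw [abs_mul B (x ^ βm), abs_of_pos (Real.rpow_pos_of_pos hxp βm)]
      rw [← e1, ← e2]
      calc |B * x ^ βm| = |(A * x ^ βp + B * x ^ βm) + (-(A * x ^ βp))| := by
            congr 1; ring
      _ ≤ |A * x ^ βp + B * x ^ βm| + |-(A * x ^ βp)| := abs_add_le _ _
      _ = |A * x ^ βp + B * x ^ βm| + |A * x ^ βp| := by rw [abs_neg]
    have tri1 : |A| * G ≤ (∫ s in (1:ℝ)..2, |A * s ^ βp + B * s ^ βm|) + |B| * H := by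
      have := intervalIntegral.integral_mono_on h12 ((hint βp).const_mul |A|)
        (hfa.add ((hint βm).const_mul |B|)) habs1
      rwa [intervalIntegral.integral_const_mul,
        intervalIntegral.integral_add hfa ((hint βm).const_mul |B|),
        intervalIntegral.integral_const_mul] at this
    have tri2 : |B| * H ≤ (∫ s in (1:ℝ)..2, |A * s ^ βp + B * s ^ βm|) + |A| * G := by
      have := intervalIntegral.integral_mono_on h12 ((hint βm).const_mul |B|)
        (hfa.add ((hint βp).const_mul |A|)) habs2
      rwa [intervalIntegral.integral_const_mul,
        intervalIntegral.integral_add hfa ((hint βp).const_mul |A|),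
        intervalIntegral.integral_const_mul] at this
    have eA : |A| = |C| * τ ^ (βp + σ) := by
      rw [hA, abs_mul C (τ ^ (βp + σ)), abs_of_pos (Real.rpow_pos_of_pos hτ _)]
    have eB : |B| = |D| * τ ^ (βm + σ) := by
      rw [hB, abs_mul D (τ ^ (βm + σ)), abs_of_pos (Real.rpow_pos_of_pos hτ _)]
    rw [eA, eB] at tri1 tri2
    constructor <;> linarith
  -- Step 1: C = 0
  have hC : C = 0 := by
    by_contra hC0
    have hCpos : 0 < |C| := abs_pos.mpr hC0
    set M := 1 + K + |D| * H with hMdef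
    have hM1 : (1:ℝ) ≤ M := by
      have : 0 ≤ |D| * H := mul_nonneg (abs_nonneg _) hH.le
      simp only [hMdef]; linarith
    set P := M / (|C| * G) with hPdef
    have hPpos : 0 < P := div_pos (by linarith) (mul_pos hCpos hG)
    have hup : ∀ τ : ℝ, 1 ≤ τ → τ ^ (βp + σ) ≤ P := by
      intro τ hτ1
      have hτ : (0:ℝ) < τ := by linarith
      have h := (key τ hτ).1
      have hle1 : τ ^ (βm + σ) ≤ 1 :=
        Real.rpow_le_one_of_one_le_of_nonpos hτ1 h2.le
      have hDH : |D| * τ ^ (βm + σ) * H ≤ |D| * H := by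
        have h0 : 0 ≤ |D| := abs_nonneg _
        nlinarith [mul_nonneg (mul_nonneg h0 hH.le) (sub_nonneg.mpr hle1)]
      have hfin : |C| * τ ^ (βp + σ) * G ≤ M := by simp only [hMdef]; linarith
      rw [hPdef, le_div_iff₀ (mul_pos hCpos hG)]
      nlinarith
    set τ₀ := max 1 ((P + 1) ^ (βp + σ)⁻¹) with hτ₀def
    have hτ₀1 : (1:ℝ) ≤ τ₀ := le_max_left _ _
    have hbase : (0:ℝ) ≤ P + 1 := by linarith
    have h1' : ((P + 1) ^ (βp + σ)⁻¹) ^ (βp + σ) = P + 1 := by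
      rw [← Real.rpow_mul hbase, inv_mul_cancel₀ (ne_of_gt h1), Real.rpow_one]
    have hcalc : P + 1 ≤ τ₀ ^ (βp + σ) := by
      rw [← h1']
      exact Real.rpow_le_rpow (Real.rpow_nonneg hbase _) (le_max_right _ _) h1.le
    have := hup τ₀ hτ₀1
    linarith
  -- Step 2: D = 0
  have hD : D = 0 := by
    by_contra hD0
    have hDpos : 0 < |D| := abs_pos.mpr hD0
    set Q := (1 + K) / (|D| * H) with hQdef
    have hQpos : 0 < Q := div_pos (by linarith) (mul_pos hDpos hH)
    have hup : ∀ τ : ℝ, 0 < τ → τ ^ (βm + σ) ≤ Q := by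
      intro τ hτ
      have h := (key τ hτ).2
      rw [hC] at h
      simp only [abs_zero, zero_mul] at h
      rw [hQdef, le_div_iff₀ (mul_pos hDpos hH)]
      nlinarith
    set τ₀ := (Q + 1) ^ (βm + σ)⁻¹ with hτ₀def
    have hτ₀ : 0 < τ₀ := Real.rpow_pos_of_pos (by linarith) _
    have hcalc : τ₀ ^ (βm + σ) = Q + 1 := by
      rw [hτ₀def, ← Real.rpow_mul (by linarith), inv_mul_cancel₀ (ne_of_lt h2), Real.rpow_one]
    have := hup τ₀ hτ₀
    rw [hcalc] at this
    linarith
  exact ⟨hC, hD⟩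
end
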